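/- Fix an integer m ≥ 1 and for R > 1 define τ(R) = πR² + (π m R^m / 2) · ∫₀¹ (R^m − cos(2πmt)) / √(1 + R^{2m} − 2R^m cos(2πmt)) dt. Then τ is strictly increasing on (1,∞) and tends to +∞ as R → ∞; consequently, every real number c > π + m is attained as c = τ(R) for a unique R > 1. -/

import Mathlib

/-!
Write `θ = 2πmt`. Since `1 + R^{2m} - 2R^m cos θ = (R^m - cos θ)² + sin² θ`, the integrand has the
form `a / √(a² + b)` with `b ≥ 0`, and for `R ≥ 1` also `a = R^m - cos θ ≥ 0`. Such a quotient lies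
in `[0, 1]` and is nondecreasing in `a`, hence in `R`; so `τ(R)` is `πR²` plus a nonnegative,
nondecreasing term, which makes `τ` strictly increasing with `τ(R) ≥ πR²`.

At `R = 1` the integrand is `|sin(θ/2)|`, of mean `2/π`, so `τ(1) = π + m`. The integrand is
bounded by `1` and continuous in `R ≥ 1` except at the null set `cos θ = 1`, so dominated
convergence makes `τ` continuous on `[1, ∞)`, and the intermediate value theorem shows that
`τ` maps `(1, ∞)` onto `(π + m, ∞)`.
-/

open Real Filter

/-- The monotonicity constant `τ(R) = πR² + I(R)` of the matching torus of the
`A_{m-1}` Milnor fibre over the circle of radius `R`. -/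
noncomputable def monotonicityConstant (m : ℕ) (R : ℝ) : ℝ :=
  π * R ^ 2 + (π * m * R ^ m / 2) *
    ∫ t in (0 : ℝ)..1,
      (R ^ m - Real.cos (2 * π * m * t)) /
        Real.sqrt (1 + R ^ (2 * m) - 2 * R ^ m * Real.cos (2 * π * m * t))

open Set MeasureTheory intervalIntegral

lemma abs_div_sqrt_sq_add_le_one {a b : ℝ} (hb : 0 ≤ b) : |a / √(a ^ 2 + b)| ≤ 1 := by
  rw [abs_div, abs_of_nonneg (sqrt_nonneg _)]
  refine div_le_one_of_le₀ ?_ (sqrt_nonneg _)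
  calc |a| = √(a ^ 2) := (sqrt_sq_eq_abs a).symm
    _ ≤ √(a ^ 2 + b) := sqrt_le_sqrt (by linarith)

lemma monotoneOn_div_sqrt_sq_add {b : ℝ} (hb : 0 ≤ b) :
    MonotoneOn (fun a => a / √(a ^ 2 + b)) (Ici 0) := by
  intro a₁ (ha₁ : 0 ≤ a₁) a₂ _ h
  rcases ha₁.eq_or_lt with rfl | ha₁
  · simp only [zero_div]
    exact div_nonneg h (sqrt_nonneg _)
  have ha₂ : 0 < a₂ := ha₁.trans_le h
  rw [div_le_div_iff₀ (by positivity) (by positivity),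
    ← pow_le_pow_iff_left₀ (by positivity) (by positivity) two_ne_zero, mul_pow, mul_pow,
    sq_sqrt (by positivity), sq_sqrt (by positivity)]
  nlinarith [mul_le_mul_of_nonneg_right (pow_le_pow_left₀ ha₁.le h 2) hb]

lemma one_add_sq_sub_two_mul_mul_cos (x θ : ℝ) :
    1 + x ^ 2 - 2 * x * cos θ = (x - cos θ) ^ 2 + sin θ ^ 2 := by
  linear_combination -(sin_sq_add_cos_sq θ)

noncomputable def torusIntegrand (m : ℕ) (R t : ℝ) : ℝ :=
  (R ^ m - cos (2 * π * m * t)) / √(1 + R ^ (2 * m) - 2 * R ^ m * cos (2 * π * m * t))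

lemma monotonicityConstant_eq (m : ℕ) (R : ℝ) :
    monotonicityConstant m R =
      π * R ^ 2 + (π * m * R ^ m / 2) * ∫ t in (0 : ℝ)..1, torusIntegrand m R t :=
  rfl

lemma torusIntegrand_eq (m : ℕ) (R t : ℝ) :
    torusIntegrand m R t = (R ^ m - cos (2 * π * m * t)) /
      √((R ^ m - cos (2 * π * m * t)) ^ 2 + sin (2 * π * m * t) ^ 2) := by
  rw [torusIntegrand, pow_mul', one_add_sq_sub_two_mul_mul_cos]

lemma abs_torusIntegrand_le_one (m : ℕ) (R t : ℝ) : |torusIntegrand m R t| ≤ 1 := by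
  rw [torusIntegrand_eq]
  exact abs_div_sqrt_sq_add_le_one (sq_nonneg _)

lemma sub_cos_nonneg_of_one_le {m : ℕ} {R : ℝ} (hR : 1 ≤ R) (θ : ℝ) :
    0 ≤ R ^ m - cos θ := by
  linarith [one_le_pow₀ (n := m) hR, cos_le_one θ]

lemma torusIntegrand_nonneg {m : ℕ} {R : ℝ} (hR : 1 ≤ R) (t : ℝ) :
    0 ≤ torusIntegrand m R t := by
  rw [torusIntegrand_eq]
  exact div_nonneg (sub_cos_nonneg_of_one_le hR _) (sqrt_nonneg _)

lemma monotoneOn_torusIntegrand (m : ℕ) (t : ℝ) :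
    MonotoneOn (fun R => torusIntegrand m R t) (Ici 1) := by
  intro R₁ (hR₁ : 1 ≤ R₁) R₂ (hR₂ : 1 ≤ R₂) h
  simp only [torusIntegrand_eq]
  refine monotoneOn_div_sqrt_sq_add (sq_nonneg _) (sub_cos_nonneg_of_one_le hR₁ _)
    (sub_cos_nonneg_of_one_le hR₂ _) ?_
  gcongr

lemma measurable_torusIntegrand (m : ℕ) (R : ℝ) : Measurable (torusIntegrand m R) := by
  unfold torusIntegrand
  fun_prop

lemma intervalIntegrable_torusIntegrand (m : ℕ) (R a b : ℝ) :
    IntervalIntegrable (torusIntegrand m R) volume a b :=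
  intervalIntegrable_const.mono_fun' (measurable_torusIntegrand m R).aestronglyMeasurable
    (Eventually.of_forall (abs_torusIntegrand_le_one m R))

lemma continuousAt_torusIntegrand {m : ℕ} {R t : ℝ} (hR : 1 ≤ R)
    (ht : cos (2 * π * m * t) ≠ 1) :
    ContinuousAt (fun R => torusIntegrand m R t) R := by
  simp only [torusIntegrand_eq]
  have hpos : 0 < R ^ m - cos (2 * π * m * t) :=
    (sub_cos_nonneg_of_one_le hR _).lt_of_ne' (by
      linarith [one_le_pow₀ (n := m) hR, (cos_le_one _).lt_of_ne ht])
  refine ContinuousAt.div (by fun_prop) (by fun_prop) (sqrt_ne_zero'.mpr ?_)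
  positivity

lemma integral_torusIntegrand_nonneg {m : ℕ} {R : ℝ} (hR : 1 ≤ R) :
    0 ≤ ∫ t in (0 : ℝ)..1, torusIntegrand m R t :=
  integral_nonneg zero_le_one fun t _ => torusIntegrand_nonneg hR t

lemma monotoneOn_integral_torusIntegrand (m : ℕ) :
    MonotoneOn (fun R => ∫ t in (0 : ℝ)..1, torusIntegrand m R t) (Ici 1) :=
  fun _ hR₁ _ hR₂ h =>
    integral_mono_on zero_le_one (intervalIntegrable_torusIntegrand m _ 0 1)
      (intervalIntegrable_torusIntegrand m _ 0 1) fun t _ => monotoneOn_torusIntegrand m t hR₁ hR₂ h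

lemma ae_cos_mul_ne_one {c : ℝ} (hc : c ≠ 0) : ∀ᵐ t : ℝ, cos (c * t) ≠ 1 := by
  filter_upwards [(countable_range fun n : ℤ => n * (2 * π) / c).ae_notMem volume] with t ht hcos
  obtain ⟨n, hn⟩ := (cos_eq_one_iff _).mp hcos
  exact ht ⟨n, show (n : ℝ) * (2 * π) / c = t by rw [hn]; field_simp⟩

lemma continuousOn_integral_torusIntegrand {m : ℕ} (hm : m ≠ 0) :
    ContinuousOn (fun R => ∫ t in (0 : ℝ)..1, torusIntegrand m R t) (Ici 1) := by
  intro R hR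
  refine intervalIntegral.tendsto_integral_filter_of_dominated_convergence (fun _ => 1)
    (Eventually.of_forall fun R => (measurable_torusIntegrand m R).aestronglyMeasurable)
    (Eventually.of_forall fun R => Eventually.of_forall fun t _ => abs_torusIntegrand_le_one m R t)
    intervalIntegrable_const ?_
  filter_upwards [ae_cos_mul_ne_one (c := 2 * π * m) (by positivity)] with t ht _
  exact (continuousAt_torusIntegrand hR ht).continuousWithinAt

lemma torusIntegrand_one (m : ℕ) (t : ℝ) : torusIntegrand m 1 t = |sin (π * m * t)| := by
  set θ := 2 * π * m * t
  have hθ : π * m * t = θ / 2 := by ring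
  rw [torusIntegrand, hθ, abs_sin_half, one_pow, one_pow,
    show 1 + 1 - 2 * 1 * cos θ = 2 * (1 - cos θ) by ring, sqrt_mul zero_le_two,
    sqrt_div' _ zero_le_two, div_mul_eq_div_div_swap, div_sqrt]

lemma integral_abs_sin_nat_mul_pi (n : ℕ) : ∫ x in (0 : ℝ)..n * π, |sin x| = 2 * n := by
  have hper : Function.Periodic (fun x => |sin x|) π := fun x => by simp [sin_add_pi]
  have hπ : ∫ x in (0 : ℝ)..π, |sin x| = 2 := by
    rw [integral_congr fun x hx =>
      abs_of_nonneg (sin_nonneg_of_mem_Icc (by simpa [pi_pos.le] using hx)), integral_sin]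
    norm_num
  have := hper.intervalIntegral_add_zsmul_eq n 0
    fun _ _ => (continuous_abs.comp continuous_sin).intervalIntegrable _ _
  simpa [hπ, mul_comm] using this

lemma integral_torusIntegrand_one {m : ℕ} (hm : m ≠ 0) :
    ∫ t in (0 : ℝ)..1, torusIntegrand m 1 t = 2 / π := by
  simp_rw [torusIntegrand_one]
  rw [integral_comp_mul_left (fun x => |sin x|) (by positivity : π * m ≠ 0), mul_zero, mul_one,
    mul_comm π, integral_abs_sin_nat_mul_pi, smul_eq_mul]
  field_simp

lemma monotonicityConstant_one {m : ℕ} (hm : m ≠ 0) : monotonicityConstant m 1 = π + m := by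
  rw [monotonicityConstant_eq, integral_torusIntegrand_one hm]
  field_simp
  ring

lemma strictMonoOn_monotonicityConstant (m : ℕ) :
    StrictMonoOn (monotonicityConstant m) (Ici 1) := by
  have hsq : StrictMonoOn (fun R : ℝ => π * R ^ 2) (Ici 1) := by
    intro a (ha : 1 ≤ a) b _ h
    beta_reduce
    gcongr
  have hcoef : MonotoneOn (fun R : ℝ => π * m * R ^ m / 2) (Ici 1) := by
    intro a (ha : 1 ≤ a) b _ h
    beta_reduce
    gcongr
  exact hsq.add_monotone (hcoef.mul (monotoneOn_integral_torusIntegrand m)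
    (fun R (hR : 1 ≤ R) => by positivity) fun R hR => integral_torusIntegrand_nonneg hR)

lemma tendsto_monotonicityConstant_atTop (m : ℕ) :
    Tendsto (monotonicityConstant m) atTop atTop := by
  refine tendsto_atTop_mono' atTop ?_ ((tendsto_pow_atTop two_ne_zero).const_mul_atTop pi_pos)
  filter_upwards [eventually_ge_atTop 1] with R (hR : 1 ≤ R)
  rw [monotonicityConstant_eq]
  have := integral_torusIntegrand_nonneg (m := m) hR
  exact le_add_of_nonneg_right (by positivity)

lemma continuousOn_monotonicityConstant {m : ℕ} (hm : m ≠ 0) :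
    ContinuousOn (monotonicityConstant m) (Ici 1) :=
  (continuous_const.mul (continuous_pow 2)).continuousOn.add
    ((continuous_const.mul (continuous_pow m)).div_const 2 |>.continuousOn.mul
      (continuousOn_integral_torusIntegrand hm))

/-- For `m ≥ 1`, the monotonicity constant `τ` is strictly
increasing on `(1,∞)` and tends to `+∞` as `R → ∞`; consequently every real
`c > π + m` is attained as `c = τ(R)` for a unique `R > 1`. -/
theorem monotonicityConstant_strictMono (m : ℕ) (hm : 1 ≤ m) :
    StrictMonoOn (monotonicityConstant m) (Set.Ioi 1) ∧
      Tendsto (monotonicityConstant m) atTop atTop ∧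
      ∀ c : ℝ, π + m < c →
        ∃! R : ℝ, R ∈ Set.Ioi (1 : ℝ) ∧ monotonicityConstant m R = c := by
  have hm₀ : m ≠ 0 := Nat.one_le_iff_ne_zero.mp hm
  have hmono := strictMonoOn_monotonicityConstant m
  have htop := tendsto_monotonicityConstant_atTop m
  have himage : monotonicityConstant m '' Ioi 1 = Ioi (π + m) := by
    rw [(continuousOn_monotonicityConstant hm₀).image_Ioi_of_strictMonoOn hmono htop,
      monotonicityConstant_one hm₀]
  refine ⟨hmono.mono Ioi_subset_Ici_self, htop, fun c hc => ?_⟩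
  obtain ⟨R, hR, rfl⟩ : c ∈ monotonicityConstant m '' Ioi 1 := himage ▸ hc
  exact ⟨R, ⟨hR, rfl⟩, fun R' ⟨hR', h⟩ =>
    hmono.injOn (mem_Ici_of_Ioi hR') (mem_Ici_of_Ioi hR) h⟩
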